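/- Let D be an integral domain and ⋆ a semistar operation on D such that D is a ⋆-domain. If D^⋆ is flat as a D-module, then D is a ((⋆̄)_f, ⋆_f)-domain. -/

import Mathlib

open Submodule

namespace Semistar

/-- A semistar operation on an integral domain `D` with quotient field `K`:
a map on `D`-submodules of `K` satisfying the semistar axioms on nonzero submodules. -/
structure SemistarOp (D K : Type*) [CommRing D] [Field K] [Algebra D K] where
  star : Submodule D K → Submodule D K
  star_smul_mul : ∀ x : K, x ≠ 0 → ∀ E : Submodule D K, E ≠ ⊥ →
    star (span D {x} * E) = span D {x} * star E
  star_mono : ∀ E F : Submodule D K, E ≠ ⊥ → F ≠ ⊥ → E ≤ F → star E ≤ star F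
  le_star : ∀ E : Submodule D K, E ≠ ⊥ → E ≤ star E
  star_star : ∀ E : Submodule D K, E ≠ ⊥ → star (star E) = star E

variable {D K : Type*} [CommRing D] [Field K] [Algebra D K]

/-- The finite-type semistar operation `⋆_f` associated to `⋆`. -/
def finStar (t : Submodule D K → Submodule D K) : Submodule D K → Submodule D K :=
  fun E => ⨆ F ∈ {F : Submodule D K | F ≠ ⊥ ∧ F.FG ∧ F ≤ E}, t F

/-- The image in `K` of an ideal of `D`. -/
def idealToK (I : Ideal D) : Submodule D K :=
  Submodule.map (Algebra.linearMap D K) I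

/-- `I` is a quasi-`⋆`-ideal: a nonzero ideal of `D` with `I^⋆ ∩ D = I`. -/
def IsQuasiIdeal (t : Submodule D K → Submodule D K) (I : Ideal D) : Prop :=
  I ≠ ⊥ ∧ t (idealToK I) ⊓ 1 = idealToK I

/-- `M` is a quasi-`⋆`-maximal ideal: maximal among quasi-`⋆`-ideals. -/
def IsQuasiMaximal (t : Submodule D K → Submodule D K) (M : Ideal D) : Prop :=
  IsQuasiIdeal t M ∧ ∀ J : Ideal D, IsQuasiIdeal t J → M ≤ J → M = J

/-- The localization `E·D_M` of a submodule `E` of `K` at (the complement of) an ideal `M`. -/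
def locAt (M : Ideal D) (E : Submodule D K) : Submodule D K where
  carrier := {x : K | ∃ s ∈ Submonoid.closure ((M : Set D)ᶜ), s • x ∈ E}
  add_mem' := by
    rintro x y ⟨s, hs, hsx⟩ ⟨t, ht, hty⟩
    refine ⟨s * t, mul_mem hs ht, ?_⟩
    have h1 : (s * t) • x ∈ E := by rw [mul_comm, mul_smul]; exact E.smul_mem t hsx
    have h2 : (s * t) • y ∈ E := by rw [mul_smul]; exact E.smul_mem s hty
    rw [smul_add]; exact E.add_mem h1 h2
  zero_mem' := ⟨1, Submonoid.one_mem _, by simp⟩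
  smul_mem' := by
    rintro c x ⟨s, hs, hsx⟩
    exact ⟨s, hs, by rw [smul_comm]; exact E.smul_mem c hsx⟩

/-- The spectral semistar operation `⋆̃` associated to `⋆`, defined by
`E^⋆̃ = ⋂ { E·D_M : M quasi-`⋆_f`-maximal }`. -/
def tildeStar (s : SemistarOp D K) : Submodule D K → Submodule D K :=
  fun E => ⨅ M ∈ {M : Ideal D | IsQuasiMaximal (finStar s.star) M}, locAt M E

/-- The localizing system `F^⋆` of ideals `I` with `I^⋆ = D^⋆`. -/
def starLS (s : SemistarOp D K) : Set (Ideal D) :=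
  {I : Ideal D | I ≠ ⊥ ∧ s.star (idealToK I) = s.star 1}

/-- The stable semistar operation `⋆̄` associated to `⋆`:
`E^⋆̄ = ⋃ {(E : J) : J ∈ F^⋆}`. -/
def barStar (s : SemistarOp D K) : Submodule D K → Submodule D K :=
  fun E => ⨆ J ∈ starLS s, E / idealToK J

/-- `I` is `⋆`-invertible: `(I·I⁻¹)^⋆ = D^⋆`. -/
def IsStarInvertible (t : Submodule D K → Submodule D K) (I : Submodule D K) : Prop :=
  t (I * (1 / I)) = t 1

/-- `D` is a `⋆`-domain: every nonzero finitely generated `D`-submodule of `K`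
is `⋆`-invertible. -/
def IsStarDomain (t : Submodule D K → Submodule D K) : Prop :=
  ∀ I : Submodule D K, I ≠ ⊥ → I.FG → IsStarInvertible t I

/-- `D` is a Prüfer `⋆`-multiplication domain: every nonzero finitely generated
ideal of `D` is `⋆_f`-invertible. -/
def IsPMD (t : Submodule D K → Submodule D K) : Prop :=
  ∀ I : Submodule D K, I ≠ ⊥ → I.FG → I ≤ 1 → IsStarInvertible (finStar t) I

/-- `D` is a P⋆MD for the semistar operation `s`. -/
abbrev IsPStarMD (s : SemistarOp D K) : Prop := IsPMD s.star

/-- Equality of two semistar operations (as maps on nonzero submodules):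
`D` is a `(∗₁, ∗₂)`-domain. -/
def StarEq (t₁ t₂ : Submodule D K → Submodule D K) : Prop :=
  ∀ E : Submodule D K, E ≠ ⊥ → t₁ E = t₂ E

/-- `⋆` is a.b. -/
def IsAB (t : Submodule D K → Submodule D K) : Prop :=
  ∀ E : Submodule D K, E ≠ ⊥ → E.FG → ∀ F G : Submodule D K, F ≠ ⊥ → G ≠ ⊥ →
    t (E * F) ≤ t (E * G) → t F ≤ t G

/-- `⋆` is e.a.b. -/
def IsEAB (t : Submodule D K → Submodule D K) : Prop :=
  ∀ E F G : Submodule D K, E ≠ ⊥ → E.FG → F ≠ ⊥ → F.FG → G ≠ ⊥ → G.FG →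
    t (E * F) ≤ t (E * G) → t F ≤ t G

/-- `D` is quasi-`⋆`-integrally closed: `D^⋆ = ⋃ {(F^⋆ : F^⋆) : F ∈ f(D)}`. -/
def IsQuasiStarIntegrallyClosed (t : Submodule D K → Submodule D K) : Prop :=
  (t 1 : Set K) = ⋃ F ∈ {F : Submodule D K | F ≠ ⊥ ∧ F.FG}, ((t F / t F : Submodule D K) : Set K)

/-- The submodule `S` of `K` is integrally closed in `K`. -/
def IsIntegrallyClosedIn (S : Submodule D K) : Prop :=
  ∀ x : K, (∃ p : Polynomial K, p.Monic ∧ (∀ i, p.coeff i ∈ S) ∧ Polynomial.eval x p = 0) → x ∈ S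

/-- `D` is `⋆`-Noetherian: ACC on quasi-`⋆`-ideals. -/
def IsStarNoetherian (t : Submodule D K → Submodule D K) : Prop :=
  ∀ c : ℕ → Ideal D, (∀ n, IsQuasiIdeal t (c n)) → Monotone c →
    ∃ n, ∀ m, n ≤ m → c m = c n

/-- `D` is `⋆`-extracoherent. -/
def IsExtraCoherent (t : Submodule D K → Submodule D K) : Prop :=
  ∀ E F : Submodule D K, E ≠ ⊥ → E.FG → F ≠ ⊥ → F.FG → E ⊓ F ≠ ⊥ →
    ∃ J : Submodule D K, J ≠ ⊥ ∧ J.FG ∧ J ≤ E ⊓ F ∧ t J = t E ⊓ t F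

/-- `D` is truly `⋆`-coherent. -/
def IsTrulyCoherent (t : Submodule D K → Submodule D K) : Prop :=
  ∀ E F : Submodule D K, E ≠ ⊥ → E.FG → F ≠ ⊥ → F.FG → E ⊓ F ≠ ⊥ →
    ∃ J : Submodule D K, J ≠ ⊥ ∧ J.FG ∧ t J = t (E ⊓ F)

/-- `D` is `⋆`-coherent. -/
def IsCoherent (t : Submodule D K → Submodule D K) : Prop :=
  ∀ E F : Submodule D K, E ≠ ⊥ → E.FG → F ≠ ⊥ → F.FG → E ⊓ F ≠ ⊥ →
    ∃ J : Submodule D K, J ≠ ⊥ ∧ J.FG ∧ t J = t E ⊓ t F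

/-- `D` is `⋆`-quasi-coherent. -/
def IsQuasiCoherent (t : Submodule D K → Submodule D K) : Prop :=
  ∀ F : Submodule D K, F ≠ ⊥ → F.FG →
    ∃ G : Submodule D K, G ≠ ⊥ ∧ G.FG ∧ t ((1 : Submodule D K) / F) = t G

/-- `D` is an `H(⋆)`-domain. -/
def IsHDomain (t : Submodule D K → Submodule D K) : Prop :=
  ∀ I : Ideal D, I ≠ ⊥ → t (idealToK I) = t 1 →
    ∃ J : Ideal D, J ≠ ⊥ ∧ J.FG ∧ J ≤ I ∧ t (idealToK J) = t 1

/-- `D` is an `I(⋆)`-domain. -/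
def IsIDomain (s : SemistarOp D K) : Prop :=
  ∀ I : Submodule D K, I ≠ ⊥ → I.FG → I ≤ 1 →
    (IsStarInvertible s.star I ↔ IsStarInvertible (finStar s.star) I)

/-!
Both finite-type operations are determined by their values on nonzero finitely generated `F`, so
it suffices that `F^⋆̄ = F^⋆` for those. The inclusion `F^⋆̄ ⊆ F^⋆` always holds. Conversely, let
`x ∈ F^⋆` and `N = (F :_D x)`; then `x ∈ (F : N)`, so it is enough that `N^⋆ = D^⋆`. For
`g ∈ (D : F)` and `f ∈ F`, ⋆-invertibility of `F` puts `g x` in `(F (D : F))^⋆ = D^⋆`; since `D^⋆`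
is flat, the conductor `(D :_D g x)` has `⋆`-closure `D^⋆` (Richman), and it multiplies `g f` into
`N`. Hence `g f ∈ N^⋆`, so `D^⋆ = (F (D : F))^⋆ ⊆ N^⋆`.
-/

lemma submodule_one_ne_bot : (1 : Submodule D K) ≠ ⊥ :=
  (Submodule.ne_bot_iff _).mpr ⟨1, Submodule.one_le.mp le_rfl, one_ne_zero⟩

lemma mem_idealToK {J : Ideal D} {y : K} :
    y ∈ (idealToK J : Submodule D K) ↔ ∃ d ∈ J, algebraMap D K d = y := by
  simp [idealToK]

lemma idealToK_le_one (J : Ideal D) : (idealToK J : Submodule D K) ≤ 1 := by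
  rintro _ ⟨d, -, rfl⟩
  exact Submodule.mem_one.mpr ⟨d, rfl⟩

lemma idealToK_ne_bot [IsFractionRing D K] {J : Ideal D} (hJ : J ≠ ⊥) :
    (idealToK J : Submodule D K) ≠ ⊥ := by
  obtain ⟨d, hdJ, hd⟩ := J.ne_bot_iff.mp hJ
  exact (idealToK J).ne_bot_iff.mpr ⟨algebraMap D K d, mem_idealToK.mpr ⟨d, hdJ, rfl⟩,
    (map_ne_zero_iff _ (IsFractionRing.injective D K)).mpr hd⟩

section FractionField

variable [IsDomain D] [IsFractionRing D K]

lemma colon_singleton_ne_bot {F : Submodule D K} (hF : F ≠ ⊥) (x : K) : F.colon {x} ≠ ⊥ := by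
  obtain ⟨f, hfF, hf⟩ := F.ne_bot_iff.mp hF
  obtain ⟨⟨u, v⟩, huv⟩ := IsLocalization.surj (nonZeroDivisors D) (x / f)
  refine (F.colon {x}).ne_bot_iff.mpr ⟨v, Submodule.mem_colon_singleton.mpr ?_,
    nonZeroDivisors.coe_ne_zero v⟩
  have hvx : (v : D) • x = u • f := by
    simp only [Algebra.smul_def, ← huv]
    field_simp
  exact hvx ▸ F.smul_mem u hfF

lemma one_div_ne_bot_of_fg {F : Submodule D K} (hFG : F.FG) : (1 : Submodule D K) / F ≠ ⊥ := by
  obtain ⟨S, rfl⟩ := hFG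
  obtain ⟨b, hb⟩ := IsLocalization.exist_integer_multiples_of_finset (nonZeroDivisors D) S
  refine (Submodule.ne_bot_iff _).mpr ⟨algebraMap D K b, ?_,
    (map_ne_zero_iff _ (IsFractionRing.injective D K)).mpr (nonZeroDivisors.coe_ne_zero b)⟩
  refine Submodule.mem_div_iff_forall_mul_mem.mpr fun z hz => ?_
  refine Submodule.span_induction (fun a ha => ?_) (by simp) (fun _ _ _ _ h₁ h₂ => ?_)
    (fun c _ _ h => ?_) hz
  · obtain ⟨c, hc⟩ := hb a ha
    exact Submodule.mem_one.mpr ⟨c, by rwa [Algebra.smul_def] at hc⟩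
  · rw [mul_add]; exact add_mem h₁ h₂
  · rw [mul_smul_comm]; exact Submodule.smul_mem _ c h

/-- Richman's criterion for flat overrings. Writing `t = a / b`, the equational criterion for
flatness applied to the relation `a • 1 = b • t` in `M` gives `1 = ∑ cⱼ yⱼ` with `a cⱼ ∈ b D`. -/
lemma one_mem_colon_mul_of_flat (M : Submodule D K) [Module.Flat D M] (h1 : (1 : K) ∈ M)
    {t : K} (ht : t ∈ M) : (1 : K) ∈ idealToK ((1 : Submodule D K).colon {t}) * M := by
  obtain ⟨⟨a, b⟩, hab⟩ := IsLocalization.surj (nonZeroDivisors D) t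
  have hb : algebraMap D K b ≠ 0 :=
    (map_ne_zero_iff _ (IsFractionRing.injective D K)).mpr (nonZeroDivisors.coe_ne_zero b)
  have hrel : ∑ i, ![a, -(b : D)] i • ![(⟨1, h1⟩ : M), ⟨t, ht⟩] i = 0 := by
    ext
    simp [Fin.sum_univ_two, Algebra.smul_def, ← hab, mul_comm]
  obtain ⟨k, c, y, hx, hc⟩ := Module.Flat.isTrivialRelation_of_sum_smul_eq_zero hrel
  have hone : (1 : K) = ∑ j, algebraMap D K (c 0 j) * (y j : K) := by
    simpa [Algebra.smul_def] using congr_arg Subtype.val (hx 0)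
  rw [hone]
  refine Submodule.sum_mem _ fun j _ => Submodule.mul_mem_mul (mem_idealToK.mpr ⟨c 0 j, ?_, rfl⟩)
    (y j).2
  have hcj : a * c 0 j = b * c 1 j := by
    simpa [Fin.sum_univ_two, sub_eq_zero, ← sub_eq_add_neg] using hc j
  refine Submodule.mem_colon_singleton.mpr (Submodule.mem_one.mpr ⟨c 1 j, ?_⟩)
  apply mul_right_cancel₀ hb
  simp only [Algebra.smul_def, mul_assoc, hab, ← map_mul, mul_comm _ a, hcj, mul_comm (b : D)]

end FractionField

lemma mul_mem_colon_div_colon {F : Submodule D K} {x f g : K} (hf : f ∈ F)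
    (hgf : g * f ∈ (1 : Submodule D K)) :
    g * f ∈ idealToK (F.colon {x}) / idealToK ((1 : Submodule D K).colon {g * x}) := by
  obtain ⟨c, hc⟩ := Submodule.mem_one.mp hgf
  refine Submodule.mem_div_iff_forall_mul_mem.mpr fun y hy => ?_
  obtain ⟨d, hd, rfl⟩ := mem_idealToK.mp hy
  obtain ⟨d', hd'⟩ := Submodule.mem_one.mp (Submodule.mem_colon_singleton.mp hd)
  refine mem_idealToK.mpr ⟨c * d, Submodule.mem_colon_singleton.mpr ?_, by rw [map_mul, hc]⟩
  have hcdx : (c * d) • x = d' • f := by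
    simp only [Algebra.smul_def, map_mul, hc, hd']
    ring
  exact hcdx ▸ F.smul_mem d' hf

namespace SemistarOp

variable (s : SemistarOp D K)

lemma one_mem_star_one : (1 : K) ∈ s.star 1 :=
  s.le_star 1 submodule_one_ne_bot (Submodule.one_le.mp le_rfl)

lemma mul_star_le_star_mul {A B : Submodule D K} (hA : A ≠ ⊥) (hB : B ≠ ⊥) :
    A * s.star B ≤ s.star (A * B) := by
  refine Submodule.mul_le.mpr fun a ha b hb => ?_
  rcases eq_or_ne a 0 with rfl | ha0
  · simp
  have hspan : span D {a} ≠ ⊥ := by simpa [Submodule.span_singleton_eq_bot] using ha0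
  have hab : a * b ∈ s.star (span D {a} * B) := by
    rw [s.star_smul_mul a ha0 B hB]
    exact Submodule.mul_mem_mul (Submodule.mem_span_singleton_self a) hb
  exact s.star_mono _ _ (Submodule.mul_eq_bot.not.mpr (not_or.mpr ⟨hspan, hB⟩))
    (Submodule.mul_eq_bot.not.mpr (not_or.mpr ⟨hA, hB⟩))
    (mul_le_mul' (Submodule.span_singleton_le_iff_mem _ _ |>.mpr ha) le_rfl) hab

lemma div_le_star {I : Submodule D K} (hI : I ≠ ⊥) (h1 : (1 : K) ∈ s.star I) (E : Submodule D K) :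
    E / I ≤ s.star E := by
  intro x hx
  rcases eq_or_ne x 0 with rfl | hx0
  · exact zero_mem _
  have hxI : span D {x} * I ≤ E :=
    Submodule.mul_le.mpr fun y hy i hi => by
      obtain ⟨c, rfl⟩ := Submodule.mem_span_singleton.mp hy
      simpa [smul_mul_assoc] using E.smul_mem c (Submodule.mem_div_iff_forall_mul_mem.mp hx i hi)
  have hne : span D {x} * I ≠ ⊥ :=
    Submodule.mul_eq_bot.not.mpr (by simp [hx0, hI])
  have hx' : x ∈ s.star (span D {x} * I) := by
    rw [s.star_smul_mul x hx0 I hI]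
    simpa using Submodule.mul_mem_mul (Submodule.mem_span_singleton_self x) h1
  exact s.star_mono _ _ hne (ne_bot_of_le_ne_bot hne hxI) hxI hx'

variable [IsFractionRing D K]

lemma mem_starLS_iff {J : Ideal D} :
    J ∈ starLS s ↔ J ≠ ⊥ ∧ (1 : K) ∈ s.star (idealToK J) := by
  refine and_congr_right fun hJ => ⟨fun h => h ▸ s.one_mem_star_one, fun h1 => ?_⟩
  have hJK := idealToK_ne_bot (K := K) hJ
  refine le_antisymm (s.star_mono _ _ hJK submodule_one_ne_bot (idealToK_le_one J)) ?_
  have hle := s.star_mono _ _ submodule_one_ne_bot (ne_bot_of_le_ne_bot hJK (s.le_star _ hJK))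
    (Submodule.one_le.mpr h1)
  rwa [s.star_star _ hJK] at hle

lemma barStar_le_star (F : Submodule D K) : barStar s F ≤ s.star F :=
  iSup₂_le fun _ hJ =>
    let hJ' := (s.mem_starLS_iff).mp hJ
    s.div_le_star (idealToK_ne_bot hJ'.1) hJ'.2 F

lemma one_mem_star_colon [IsDomain D] [Module.Flat D (s.star 1)] {t : K} (ht : t ∈ s.star 1) :
    (1 : K) ∈ s.star (idealToK ((1 : Submodule D K).colon {t})) := by
  have hJ : (idealToK ((1 : Submodule D K).colon {t}) : Submodule D K) ≠ ⊥ :=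
    idealToK_ne_bot (colon_singleton_ne_bot submodule_one_ne_bot t)
  have h := s.mul_star_le_star_mul hJ submodule_one_ne_bot
    (one_mem_colon_mul_of_flat (s.star 1) s.one_mem_star_one ht)
  rwa [mul_one] at h

lemma star_le_barStar [IsDomain D] [Module.Flat D (s.star 1)] {F : Submodule D K} (hF : F ≠ ⊥)
    (hFG : F.FG) (hinv : IsStarInvertible s.star F) : s.star F ≤ barStar s F := by
  intro x hx
  set N : Ideal D := F.colon {x}
  have hN : N ≠ ⊥ := colon_singleton_ne_bot hF x
  have hNK : (idealToK N : Submodule D K) ≠ ⊥ := idealToK_ne_bot hN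
  have hG := one_div_ne_bot_of_fg hFG
  have hFG_le : F * (1 / F) ≤ s.star (idealToK N) := by
    refine Submodule.mul_le.mpr fun f hf g hg => ?_
    have hgx : g * x ∈ s.star 1 := by
      rw [← hinv, mul_comm F]
      exact s.mul_star_le_star_mul hG hF (Submodule.mul_mem_mul hg hx)
    have hcolon : (idealToK ((1 : Submodule D K).colon {g * x}) : Submodule D K) ≠ ⊥ :=
      idealToK_ne_bot (colon_singleton_ne_bot submodule_one_ne_bot _)
    rw [mul_comm f g]
    exact s.div_le_star hcolon (s.one_mem_star_colon hgx) _
      (mul_mem_colon_div_colon hf (Submodule.mem_div_iff_forall_mul_mem.mp hg f hf))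
  have h1N : (1 : K) ∈ s.star (idealToK N) := by
    have hle := s.star_mono _ _ (Submodule.mul_eq_bot.not.mpr (not_or.mpr ⟨hF, hG⟩))
      (ne_bot_of_le_ne_bot hNK (s.le_star _ hNK)) hFG_le
    rw [s.star_star _ hNK, hinv] at hle
    exact hle s.one_mem_star_one
  have hxN : x ∈ F / idealToK N := Submodule.mem_div_iff_forall_mul_mem.mpr fun y hy => by
    obtain ⟨d, hd, rfl⟩ := mem_idealToK.mp hy
    simpa [mul_comm, Algebra.smul_def] using Submodule.mem_colon_singleton.mp hd
  have hle : F / idealToK N ≤ barStar s F :=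
    le_iSup₂ (f := fun J (_ : J ∈ starLS s) => F / idealToK J) N
      ((s.mem_starLS_iff).mpr ⟨hN, h1N⟩)
  exact hle hxN

end SemistarOp

theorem statement9 {D K : Type*} [CommRing D] [IsDomain D] [Field K] [Algebra D K]
    [IsFractionRing D K] (s : SemistarOp D K)
    (h : IsStarDomain s.star) (hflat : Module.Flat D ↥(s.star 1)) :
    StarEq (finStar (barStar s)) (finStar s.star) := by
  intro E _
  refine iSup_congr fun F => iSup_congr fun hF => le_antisymm (s.barStar_le_star F) ?_
  exact s.star_le_barStar hF.1 hF.2.1 (h F hF.1 hF.2.1)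

end Semistar
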